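/- arXiv:2101.01138 — 5 statements merged into one kernel-verified Lean document; each statement's English description precedes it below -/
import Mathlib

section
/- Let f be a nonzero polynomial over ℂ. If there exists a rational function g ∈ ℂ(x) with g' = 1/f, then f is a monomial, i.e., f = a(x - b)^d for some a, b ∈ ℂ and d ∈ ℕ. -/
open Polynomial

/-!
Write `g = p / q` in lowest terms. Then `g' = 1 / f` says `f * W(q, p) = q ^ 2` for
the Wronskian `W(q, p) = q p' - q' p`. Since `p` does not vanish at the roots of `q`, at each such
root `W(q, p)` vanishes to lower order than `q`; so `deg W(q, p) ≤ deg q - n`, where `n` is the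
number of distinct roots of `q`. On the other hand `W(q, p) = W(q, p - c q)`, and choosing `c` with
`deg (p - c q) ≠ deg q` gives `deg W(q, p) ≥ deg q - 1`. Hence `q` has at most one distinct root
`b`, and every root of `f` is a root of `q`, so `f = a (X - b) ^ d`.
-/

/-- The formal derivative of a rational function, defined via the quotient rule
on the canonical numerator and denominator. -/
noncomputable def rderiv (r : RatFunc ℂ) : RatFunc ℂ :=
  algebraMap (Polynomial ℂ) (RatFunc ℂ)
      (Polynomial.derivative r.num * r.denom - r.num * Polynomial.derivative r.denom) /
    algebraMap (Polynomial ℂ) (RatFunc ℂ) (r.denom ^ 2)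

namespace Polynomial

theorem coeff_X_mul_derivative {R : Type*} [Semiring R] (p : R[X]) (n : ℕ) :
    (X * derivative p).coeff n = p.coeff n * n := by
  cases n with
  | zero => simp
  | succ n => rw [coeff_X_mul, coeff_derivative]; push_cast; rfl

theorem natDegree_X_mul_derivative_le {R : Type*} [Semiring R] (p : R[X]) :
    (X * derivative p).natDegree ≤ p.natDegree :=
  natDegree_le_iff_coeff_eq_zero.mpr fun n hn => by
    rw [coeff_X_mul_derivative, coeff_eq_zero_of_natDegree_lt (by exact_mod_cast hn), zero_mul]

section CharZeroDomain

variable {R : Type*} [CommRing R] [IsDomain R] [CharZero R]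

/-- The top coefficients of `a * b'` and `a' * b` are `k` resp. `m` times `lc a * lc b`
(`m`, `k` the degrees of `a`, `b`); they cancel only when `m = k`. -/
theorem natDegree_wronskian_add_one {a b : R[X]} (ha : a ≠ 0) (hb : b ≠ 0)
    (hab : a.natDegree ≠ b.natDegree) :
    (wronskian a b).natDegree + 1 = a.natDegree + b.natDegree := by
  set m := a.natDegree
  set k := b.natDegree
  have hcoeff : (X * wronskian a b).coeff (m + k) =
      a.leadingCoeff * b.leadingCoeff * ((k : R) - m) := by
    have hX : X * wronskian a b = a * (X * derivative b) - X * derivative a * b := by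
      rw [wronskian]; ring
    rw [hX, coeff_sub, coeff_mul_add_eq_of_natDegree_le le_rfl (natDegree_X_mul_derivative_le b),
      coeff_mul_add_eq_of_natDegree_le (natDegree_X_mul_derivative_le a) le_rfl,
      coeff_X_mul_derivative, coeff_X_mul_derivative, leadingCoeff, leadingCoeff]
    ring
  have hne : (X * wronskian a b).coeff (m + k) ≠ 0 := by
    rw [hcoeff]
    refine mul_ne_zero (mul_ne_zero (leadingCoeff_ne_zero.mpr ha) (leadingCoeff_ne_zero.mpr hb)) ?_
    exact sub_ne_zero.mpr (Nat.cast_injective.ne (Ne.symm hab))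
  have hw : wronskian a b ≠ 0 := by
    rintro h
    simp [h] at hne
  have hle := le_natDegree_of_ne_zero hne
  rw [natDegree_X_mul hw] at hle
  have hlt := natDegree_wronskian_lt_add hw
  omega

theorem rootMultiplicity_wronskian_lt {a b : R[X]} {z : R} (hw : wronskian a b ≠ 0)
    (haz : a.IsRoot z) (hbz : ¬ b.IsRoot z) :
    rootMultiplicity z (wronskian a b) < rootMultiplicity z a := by
  have ha : a ≠ 0 := by rintro rfl; simp at hw
  have ha' : derivative a ≠ 0 := by
    intro h
    rw [eq_C_of_natDegree_eq_zero (derivative_eq_zero.mp h)] at ha haz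
    exact ha (by rw [IsRoot, eval_C] at haz; rw [haz, map_zero])
  have hb : b ≠ 0 := by rintro rfl; simp at hbz
  have hm := (rootMultiplicity_pos ha).mpr haz
  by_contra! hle
  have hdvd : (X - C z) ^ rootMultiplicity z a ∣ derivative a * b := by
    have h : derivative a * b = a * derivative b - wronskian a b := by rw [wronskian]; ring
    rw [h]
    exact dvd_sub ((pow_rootMultiplicity_dvd a z).mul_right _)
      ((le_rootMultiplicity_iff hw).mp hle)
  have hmul := (le_rootMultiplicity_iff (mul_ne_zero ha' hb)).mpr hdvd
  rw [rootMultiplicity_mul (mul_ne_zero ha' hb), derivative_rootMultiplicity_of_root haz,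
    rootMultiplicity_eq_zero hbz] at hmul
  omega

end CharZeroDomain

theorem natDegree_le_natDegree_wronskian_add_one {K : Type*} [Field K] [CharZero K]
    {a b : K[X]} (hw : wronskian a b ≠ 0) :
    a.natDegree ≤ (wronskian a b).natDegree + 1 := by
  have ha : a ≠ 0 := by rintro rfl; simp at hw
  set b₀ := b - C (b.coeff a.natDegree / a.leadingCoeff) * a
  have hw₀ : wronskian a b₀ = wronskian a b := by
    rw [wronskian, wronskian, derivative_sub, derivative_C_mul]; ring
  have hb₀ : b₀ ≠ 0 := by
    rintro h
    rw [← hw₀, h, wronskian_zero_right] at hw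
    exact hw rfl
  have hcoeff : b₀.coeff a.natDegree = 0 := by
    rw [coeff_sub, coeff_C_mul, ← leadingCoeff,
      div_mul_cancel₀ _ (leadingCoeff_ne_zero.mpr ha), sub_self]
  have hdeg : a.natDegree ≠ b₀.natDegree := fun h =>
    hb₀ (leadingCoeff_eq_zero.mp (by rwa [leadingCoeff, ← h]))
  rw [← hw₀, natDegree_wronskian_add_one ha hb₀ hdeg]
  omega

section IsAlgClosed

variable {K : Type*} [Field K] [IsAlgClosed K]

theorem natDegree_wronskian_add_card_roots_toFinset_le [CharZero K] [DecidableEq K]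
    {a b : K[X]} (hw : wronskian a b ≠ 0) (hdvd : wronskian a b ∣ a ^ 2) (hab : IsCoprime a b) :
    (wronskian a b).natDegree + a.roots.toFinset.card ≤ a.natDegree := by
  have ha : a ≠ 0 := by rintro rfl; simp at hw
  have hroots : (wronskian a b).roots ≤ a.roots - a.roots.dedup := by
    refine Multiset.le_iff_count.mpr fun z => ?_
    rw [count_roots, Multiset.count_sub, count_roots, Multiset.count_dedup]
    split_ifs with haz <;> rw [mem_roots ha] at haz
    · have hbz : ¬ b.IsRoot z := by
        simpa [haz.eq_zero] using aeval_ne_zero_of_isCoprime hab z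
      have := rootMultiplicity_wronskian_lt hw haz hbz
      omega
    · have hwz : ¬ (wronskian a b).IsRoot z := fun hwz => by
        have h := eval_dvd (x := z) hdvd
        rw [hwz.eq_zero, zero_dvd_iff, eval_pow] at h
        exact haz (pow_eq_zero_iff two_ne_zero |>.mp h)
      rw [rootMultiplicity_eq_zero hwz]
      exact Nat.zero_le _
  calc (wronskian a b).natDegree + a.roots.toFinset.card
      = Multiset.card (wronskian a b).roots + Multiset.card a.roots.dedup := by
        rw [IsAlgClosed.card_roots_eq_natDegree, Multiset.card_toFinset]
    _ ≤ Multiset.card (a.roots - a.roots.dedup) + Multiset.card a.roots.dedup := by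
        gcongr
    _ = a.natDegree := by
        rw [← Multiset.card_add, Multiset.sub_add_cancel (Multiset.dedup_le _),
          IsAlgClosed.card_roots_eq_natDegree]

theorem eq_C_leadingCoeff_mul_X_sub_C_pow {p : K[X]} {b : K} (h : ∀ z, p.IsRoot z → z = b) :
    p = C p.leadingCoeff * (X - C b) ^ p.natDegree := by
  have hroots : p.roots = Multiset.replicate p.natDegree b := by
    rw [← IsAlgClosed.card_roots_eq_natDegree, Multiset.eq_replicate_card]
    exact fun z hz => h z (isRoot_of_mem_roots hz)
  conv_lhs => rw [← C_leadingCoeff_mul_prod_multiset_X_sub_C (p := p)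
    IsAlgClosed.card_roots_eq_natDegree, hroots, Multiset.map_replicate, Multiset.prod_replicate]

end IsAlgClosed

end Polynomial

theorem rderiv_eq_wronskian (r : RatFunc ℂ) :
    rderiv r = algebraMap ℂ[X] (RatFunc ℂ) (wronskian r.denom r.num) /
      algebraMap ℂ[X] (RatFunc ℂ) (r.denom ^ 2) := by
  rw [rderiv, wronskian]
  congr 2
  ring

theorem mul_wronskian_eq_sq_of_rderiv_eq_inv {f : ℂ[X]} (hf : f ≠ 0) {g : RatFunc ℂ}
    (hg : rderiv g = (algebraMap ℂ[X] (RatFunc ℂ) f)⁻¹) :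
    f * wronskian g.denom g.num = g.denom ^ 2 := by
  apply RatFunc.algebraMap_injective ℂ
  have hf' := RatFunc.algebraMap_ne_zero hf
  have hq' := RatFunc.algebraMap_ne_zero (pow_ne_zero 2 g.denom_ne_zero)
  rw [rderiv_eq_wronskian, div_eq_iff hq', eq_inv_mul_iff_mul_eq₀ hf'] at hg
  rw [map_mul, hg]

theorem monomial_of_rational_antiderivative (f : Polynomial ℂ) (hf : f ≠ 0)
    (g : RatFunc ℂ)
    (hg : rderiv g = (algebraMap (Polynomial ℂ) (RatFunc ℂ) f)⁻¹) :
    ∃ (a b : ℂ) (d : ℕ), f = Polynomial.C a * (Polynomial.X - Polynomial.C b) ^ d := by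
  classical
  set q := g.denom
  have key : f * wronskian q g.num = q ^ 2 := mul_wronskian_eq_sq_of_rderiv_eq_inv hf hg
  have hw : wronskian q g.num ≠ 0 := fun h => by
    rw [h, mul_zero] at key
    exact pow_ne_zero 2 g.denom_ne_zero key.symm
  have hlower := natDegree_le_natDegree_wronskian_add_one hw
  have hupper := natDegree_wronskian_add_card_roots_toFinset_le hw (Dvd.intro_left f key)
    g.isCoprime_num_denom.symm
  obtain ⟨b, hb⟩ :=
    Finset.card_le_one_iff_subset_singleton.mp (by omega : q.roots.toFinset.card ≤ 1)
  refine ⟨_, b, _, eq_C_leadingCoeff_mul_X_sub_C_pow fun z hz => ?_⟩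
  have hqz : q.IsRoot z := by
    have h := congrArg (eval z) key
    rw [eval_mul, hz.eq_zero, zero_mul, eval_pow, eq_comm] at h
    exact pow_eq_zero_iff two_ne_zero |>.mp h
  simpa using hb (Multiset.mem_toFinset.mpr ((mem_roots g.denom_ne_zero).mpr hqz))
end

section
/- Let f, h be polynomials over ℂ with f ≠ 0 satisfying h'·f − h·f' = f. Then there exist c ∈ ℂ and a polynomial h₁ = h − c·f with deg(h₁) ≤ 1. -/
open Polynomial

/-!
The relation says that the Wronskian `W(f, h) = f h' - f' h` equals `f`. For polynomials `a`, `b`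
of different degrees `m ≠ n` the coefficient of `W(a, b)` in degree `m + n - 1` is
`(n - m) lc(a) lc(b) ≠ 0`, so `deg W(a, b) = m + n - 1`. Subtracting a suitable multiple `c f`
from `h` changes neither the Wronskian nor `f`, but makes `deg (h - c f) ≠ deg f`; then
`deg f + deg (h - c f) - 1 = deg f` forces `deg (h - c f) ≤ 1`.
-/

namespace Polynomial

section Wronskian

variable {R : Type*} [CommRing R]

theorem coeff_mul_derivative_natDegree_add_sub_one (a b : R[X]) :
    (a * derivative b).coeff (a.natDegree + b.natDegree - 1) =
      a.leadingCoeff * b.leadingCoeff * b.natDegree := by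
  rcases hb : b.natDegree with _ | k
  · simp [derivative_of_natDegree_zero hb]
  · have hb' : (derivative b).natDegree ≤ k := by
      simpa [hb] using natDegree_derivative_le b
    rw [Nat.add_sub_assoc (Nat.le_add_left 1 k), Nat.add_sub_cancel,
      coeff_mul_add_eq_of_natDegree_le le_rfl hb', coeff_derivative, leadingCoeff, leadingCoeff, hb]
    push_cast
    ring

theorem coeff_wronskian_natDegree_add_sub_one (a b : R[X]) :
    (wronskian a b).coeff (a.natDegree + b.natDegree - 1) =
      ((b.natDegree : R) - a.natDegree) * a.leadingCoeff * b.leadingCoeff := by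
  rw [wronskian, coeff_sub, coeff_mul_derivative_natDegree_add_sub_one, mul_comm (derivative a),
    add_comm a.natDegree, coeff_mul_derivative_natDegree_add_sub_one]
  ring

theorem natDegree_wronskian_of_natDegree_ne [IsDomain R] [CharZero R] {a b : R[X]}
    (ha : a ≠ 0) (hb : b ≠ 0) (hne : a.natDegree ≠ b.natDegree) :
    (wronskian a b).natDegree = a.natDegree + b.natDegree - 1 := by
  have hcoeff : (wronskian a b).coeff (a.natDegree + b.natDegree - 1) ≠ 0 := by
    rw [coeff_wronskian_natDegree_add_sub_one]
    refine mul_ne_zero (mul_ne_zero ?_ (leadingCoeff_ne_zero.mpr ha)) (leadingCoeff_ne_zero.mpr hb)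
    exact sub_ne_zero.mpr (Nat.cast_injective.ne hne.symm)
  have hw : wronskian a b ≠ 0 := fun hw ↦ hcoeff (by simp [hw])
  have := natDegree_wronskian_lt_add hw
  exact le_antisymm (by omega) (le_natDegree_of_ne_zero hcoeff)

theorem degree_le_one_of_wronskian_eq_left [IsDomain R] [CharZero R] {a b : R[X]} (ha : a ≠ 0)
    (hne : b.degree ≠ a.degree) (hw : wronskian a b = a) : b.degree ≤ 1 := by
  rcases eq_or_ne b 0 with rfl | hb
  · simp
  have hne' : a.natDegree ≠ b.natDegree := fun h ↦ hne (by rw [degree_eq_natDegree ha,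
    degree_eq_natDegree hb, h])
  have := natDegree_wronskian_of_natDegree_ne ha hb hne'
  rw [hw] at this
  exact degree_le_of_natDegree_le (n := 1) (by omega)

end Wronskian

/-- When `deg h = deg f`, the multiple `c f` with `c = lc(h) / lc(f)` cancels the leading term. -/
theorem exists_degree_sub_C_mul_ne {K : Type*} [Field K] {f : K[X]} (hf : f ≠ 0) (h : K[X]) :
    ∃ c : K, (h - C c * f).degree ≠ f.degree := by
  by_cases hd : h.degree = f.degree
  · have hh : h ≠ 0 := fun h0 ↦ hf (degree_eq_bot.mp (by rw [← hd, h0, degree_zero]))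
    have hc : h.leadingCoeff / f.leadingCoeff ≠ 0 :=
      div_ne_zero (leadingCoeff_ne_zero.mpr hh) (leadingCoeff_ne_zero.mpr hf)
    refine ⟨h.leadingCoeff / f.leadingCoeff, (degree_sub_lt_left ?_ hh ?_).trans_le hd.le |>.ne⟩
    · rw [degree_C_mul hc, hd]
    · rw [leadingCoeff_mul, leadingCoeff_C, div_mul_cancel₀ _ (leadingCoeff_ne_zero.mpr hf)]
  · exact ⟨0, by simpa using hd⟩

end Polynomial

theorem exists_shift_of_degree_le_one (f h : Polynomial ℂ) (hf : f ≠ 0)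
    (hrel : Polynomial.derivative h * f - h * Polynomial.derivative f = f) :
    ∃ c : ℂ, (h - Polynomial.C c * f).degree ≤ 1 := by
  obtain ⟨c, hc⟩ := exists_degree_sub_C_mul_ne hf h
  refine ⟨c, degree_le_one_of_wronskian_eq_left hf hc ?_⟩
  simp only [wronskian, derivative_sub, derivative_C_mul]
  linear_combination hrel
end

section
/- Let i, j be positive integers and ν ∈ ℂ with ν^{i+j} = (−1)^{i−1}·2^{1−i−j}·(i+j)^{i+j}/(iⁱ·jʲ). Then z(x) = (x−ν)ⁱ(x+ν)ʲ + 1 is admissible, i.e., z' divides z² − 1 in ℂ[x]. -/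
open Polynomial

private lemma two_root_eval_key (i j : ℕ) (hi : 0 < i) (hj : 0 < j) (ν : ℂ)
    (hν : ν ^ (i + j) =
      (-1 : ℂ) ^ (i - 1) * (2 : ℂ) ^ ((1 : ℤ) - i - j) *
        ((i + j : ℂ) ^ (i + j) / ((i : ℂ) ^ i * (j : ℂ) ^ j))) :
    (((j:ℂ)-i)*ν/((i:ℂ)+j) - ν)^i * (((j:ℂ)-i)*ν/((i:ℂ)+j) + ν)^j + 2 = 0 := by
  have hs : (i:ℂ)+j ≠ 0 := by
    have : ((i+j:ℕ):ℂ) ≠ 0 := Nat.cast_ne_zero.mpr (by omega)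
    push_cast at this; exact this
  have hi0 : (i:ℂ) ≠ 0 := Nat.cast_ne_zero.mpr hi.ne'
  have hj0 : (j:ℂ) ≠ 0 := Nat.cast_ne_zero.mpr hj.ne'
  have e1 : ((j:ℂ)-i)*ν/((i:ℂ)+j) - ν = (-2*i*ν)/((i:ℂ)+j) := by
    field_simp; ring
  have e2 : ((j:ℂ)-i)*ν/((i:ℂ)+j) + ν = (2*j*ν)/((i:ℂ)+j) := by
    field_simp; ring
  have h2 : (2:ℂ)^((1:ℤ)-i-j) = 2 / 2^(i+j) := by
    rw [show (1:ℤ)-i-j = 1 - ((i+j:ℕ):ℤ) by push_cast; ring,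
      zpow_sub₀ two_ne_zero, zpow_one, zpow_natCast]
  have hneg : (-1:ℂ)^(i-1) = -(-1)^i := by
    obtain ⟨i', rfl⟩ : ∃ i', i = i'+1 := ⟨i-1, by omega⟩
    simp [pow_succ]
  rw [e1, e2, div_pow, div_pow, div_mul_div_comm, ← pow_add]
  rw [show (-2*(i:ℂ)*ν)^i = (-1)^i * 2^i * i^i * ν^i by
    rw [show -2*(i:ℂ)*ν = (-1)*2*i*ν by ring]; rw [mul_pow, mul_pow, mul_pow]]
  rw [show (2*(j:ℂ)*ν)^j = 2^j * j^j * ν^j by rw [mul_pow, mul_pow]]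
  have hcast : ((i:ℂ)+j) = ((i+j:ℕ):ℂ) := by push_cast; ring
  rw [show (-1:ℂ)^i * 2^i * i^i * ν^i * (2^j * j^j * ν^j)
      = (-1)^i * (2^i * 2^j) * (i^i * j^j) * (ν^i * ν^j) by ring,
    ← pow_add, ← pow_add, hν, hneg, h2, hcast]
  have hij : ((i+j:ℕ):ℂ) ≠ 0 := by rw [← hcast]; exact hs
  have h2n : (2:ℂ)^(i+j) ≠ 0 := pow_ne_zero _ two_ne_zero
  have hijn : ((i+j:ℕ):ℂ)^(i+j) ≠ 0 := pow_ne_zero _ hij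
  field_simp
  ring_nf
  rw [show ((-1:ℂ))^(i*2) = 1 by rw [mul_comm, pow_mul]; norm_num]
  ring

theorem two_root_admissible (i j : ℕ) (hi : 0 < i) (hj : 0 < j) (ν : ℂ)
    (hν : ν ^ (i + j) =
      (-1 : ℂ) ^ (i - 1) * (2 : ℂ) ^ ((1 : ℤ) - i - j) *
        ((i + j : ℂ) ^ (i + j) / ((i : ℂ) ^ i * (j : ℂ) ^ j)))
    (z : Polynomial ℂ)
    (hz : z = (Polynomial.X - Polynomial.C ν) ^ i *
      (Polynomial.X + Polynomial.C ν) ^ j + 1) :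
    Polynomial.derivative z ∣ z ^ 2 - 1 := by
  have hs : (i:ℂ)+j ≠ 0 := by
    have : ((i+j:ℕ):ℂ) ≠ 0 := Nat.cast_ne_zero.mpr (by omega)
    push_cast at this; exact this
  set x₀ : ℂ := ((j:ℂ)-i)*ν/((i:ℂ)+j) with hx₀
  -- derivative
  have hz' : derivative z = (X - C ν)^(i-1) * (X + C ν)^(j-1) *
      (C ((i:ℂ)+j) * X + C (((i:ℂ)-j)*ν)) := by
    subst hz
    obtain ⟨i', rfl⟩ : ∃ i', i = i'+1 := ⟨i-1, by omega⟩
    obtain ⟨j', rfl⟩ : ∃ j', j = j'+1 := ⟨j-1, by omega⟩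
    simp only [derivative_add, derivative_one, derivative_mul, derivative_pow,
      derivative_sub, derivative_X, derivative_C, sub_zero, add_zero, mul_one,
      Nat.add_sub_cancel]
    push_cast
    simp only [C_add, C_sub, C_mul, C_1]
    rw [pow_succ (X - C ν), pow_succ (X + C ν)]
    ring
  -- factorization of z^2 - 1
  have hfac : z^2 - 1 = ((X - C ν)^i * (X + C ν)^j) *
      ((X - C ν)^i * (X + C ν)^j + 2) := by subst hz; ring
  -- first factor divides
  have dvd1 : (X - C ν)^(i-1) * (X + C ν)^(j-1) ∣ (X - C ν)^i * (X + C ν)^j :=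
    mul_dvd_mul (pow_dvd_pow _ (by omega)) (pow_dvd_pow _ (by omega))
  -- linear factor divides the second factor
  have hroot : ((X - C ν)^i * (X + C ν)^j + 2).IsRoot x₀ := by
    simp only [IsRoot, eval_add, eval_mul, eval_pow, eval_sub, eval_X, eval_C,
      eval_ofNat]
    exact two_root_eval_key i j hi hj ν hν
  have hLfac : C ((i:ℂ)+j) * X + C (((i:ℂ)-j)*ν) = C ((i:ℂ)+j) * (X - C x₀) := by
    rw [mul_sub, ← C_mul, hx₀, mul_div_cancel₀ _ hs]
    simp only [C_sub, C_mul]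
    ring
  have dvd2 : (C ((i:ℂ)+j) * X + C (((i:ℂ)-j)*ν)) ∣
      ((X - C ν)^i * (X + C ν)^j + 2) := by
    obtain ⟨t, ht⟩ := dvd_iff_isRoot.mpr hroot
    refine ⟨C (((i:ℂ)+j)⁻¹) * t, ?_⟩
    rw [ht, hLfac, show C ((i:ℂ)+j) * (X - C x₀) * (C (((i:ℂ)+j)⁻¹) * t)
        = (C ((i:ℂ)+j) * C (((i:ℂ)+j)⁻¹)) * ((X - C x₀) * t) from by ring,
      ← C_mul, mul_inv_cancel₀ hs, C_1, one_mul]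
  rw [hz', hfac]
  exact mul_dvd_mul dvd1 dvd2
end

section
/- If z = xⁿ ∈ ℂ[x] (monic reduced) satisfies z² ≡ 0 (mod z'), then conversely the only monic polynomial z = xⁿ + a₂x^{n−2} + ⋯ + aₙ with z² ≡ 0 (mod z') is z = xⁿ. -/
/-!
Since `z' ∣ z²`, every root of `z'` is a root of `z`, and a root of multiplicity `m` of `z` has
multiplicity `m - 1` in `z'`. Counting roots with multiplicity gives
`deg z' = deg z - #(distinct roots of z)`, while `deg z' = deg z - 1`; so `z = (x - r)ⁿ`, and the
vanishing coefficient `-n r` of `xⁿ⁻¹` forces `r = 0`.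
-/

open Polynomial

namespace Polynomial

theorem roots_derivative_eq_roots_sub_dedup {R : Type*} [CommRing R] [IsDomain R] [CharZero R]
    [DecidableEq R] {p : R[X]} (h : ∀ x, p.derivative.IsRoot x → p.IsRoot x) :
    p.derivative.roots = p.roots - p.roots.dedup := by
  ext x
  rw [Multiset.count_sub, Multiset.count_dedup]
  by_cases hx : x ∈ p.roots
  · rw [if_pos hx, count_roots, count_roots,
      derivative_rootMultiplicity_of_root (isRoot_of_mem_roots hx)]
  · have hx' : x ∉ p.derivative.roots := fun hx' ↦ by
      obtain ⟨hp', hroot⟩ := mem_roots'.mp hx'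
      exact hx (mem_roots'.mpr ⟨fun hp ↦ hp' (by rw [hp, derivative_zero]), h x hroot⟩)
    rw [if_neg hx, Multiset.count_eq_zero.mpr hx, Multiset.count_eq_zero.mpr hx']

theorem IsRoot.of_derivative_dvd_pow {R : Type*} [CommRing R] [IsDomain R] {p : R[X]} {k : ℕ}
    (h : derivative p ∣ p ^ k) {x : R} (hx : p.derivative.IsRoot x) : p.IsRoot x :=
  eq_zero_of_pow_eq_zero (by simpa using hx.dvd h)

theorem natSepDegree_eq_one_of_derivative_dvd_pow {K : Type*} [Field K] [IsAlgClosed K]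
    [CharZero K] {p : K[X]} {k : ℕ} (hp : p.natDegree ≠ 0) (h : derivative p ∣ p ^ k) :
    p.natSepDegree = 1 := by
  classical
  have hsplit (q : K[X]) : q.natDegree = q.roots.card :=
    (IsAlgClosed.splits q).natDegree_eq_card_roots
  have hroots := roots_derivative_eq_roots_sub_dedup fun _ ↦ IsRoot.of_derivative_dvd_pow h
  have hcard : p.natDegree - 1 = p.natDegree - p.roots.dedup.card := by
    rw [← natDegree_derivative, hsplit, hroots, Multiset.card_sub (Multiset.dedup_le _), ← hsplit]
  have hle : p.roots.dedup.card ≤ p.natDegree :=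
    hsplit p ▸ Multiset.card_le_card (Multiset.dedup_le _)
  rw [natSepDegree_eq_of_isAlgClosed K, aroots_def, Algebra.algebraMap_self, map_id,
    Multiset.toFinset, Finset.card_mk]
  omega

theorem Monic.eq_X_pow_of_natSepDegree_eq_one {K : Type*} [Field K] [CharZero K] {p : K[X]}
    (hm : p.Monic) (hs : p.Splits) (hsep : p.natSepDegree = 1) (hnext : p.nextCoeff = 0) :
    p = X ^ p.natDegree := by
  obtain ⟨m, y, hm0, rfl⟩ := eq_X_sub_C_pow_of_natSepDegree_eq_one_of_splits hm hs hsep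
  have hy : y = 0 := by
    simpa [nextCoeff_pow (monic_X_sub_C y), nextCoeff_X_sub_C, hm0] using hnext
  simp [hy]

end Polynomial

theorem monic_reduced_with_deriv_dvd_sq (n : ℕ) (hn : 1 ≤ n) (z : Polynomial ℂ)
    (hm : z.Monic) (hd : z.natDegree = n) (hred : z.coeff (n - 1) = 0)
    (hdvd : Polynomial.derivative z ∣ z ^ 2) :
    z = Polynomial.X ^ n := by
  have hdeg : z.natDegree ≠ 0 := by omega
  have hnext : z.nextCoeff = 0 := by rwa [nextCoeff, if_neg hdeg, hd]
  rw [← hd]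
  exact hm.eq_X_pow_of_natSepDegree_eq_one (IsAlgClosed.splits z)
    (natSepDegree_eq_one_of_derivative_dvd_pow hdeg hdvd) hnext
end

section
/- For each n, the set of monic reduced admissible polynomials of degree n is finite; i.e., there are only finitely many z = xⁿ + a₂x^{n−2} + ⋯ + aₙ ∈ ℂ[x] with z' | z² − 1. -/
/-!
Put `p = n (z² - 1) / z'`, monic of degree `n + 1`: then `z' ∣ z² - 1` is the polynomial system
`n z² - p z' = n` in the coefficients of `z` and `p`. Give the coefficient of `x ^ k` weight `n - k`
in `z` and `n + 1 - k` in `p`; the coefficient of `x ^ m` in `n z² - p z'` is then weighted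
homogeneous of degree `2n - m`, so the system reads `Fₘ = n δₘ₀` (`m < 2n`) with `Fₘ` weighted
homogeneous of positive degree.

The homogeneous system `Fₘ = 0` has only the trivial solution: it says `z' ∣ z²`, so every root of
`z'` is a root of `z`, and counting multiplicities leaves `z` a single root, which is `0` because
`z` is reduced; hence `z = xⁿ` and `p = xⁿ⁺¹`. By the Nullstellensatz every variable is nilpotent
modulo the `Fₘ`, so modulo the inhomogeneous system every element of large weight reduces to lower
weight. The coordinate ring of the solution set is thus finite-dimensional, and the solution set is
finite.
-/

open Polynomial

namespace MvPolynomial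

section Weighted

variable {σ R : Type*} [CommSemiring R] {w : σ → ℕ}

theorem weightedHomogeneousComponent_mul_of_isWeightedHomogeneous {F : MvPolynomial σ R} {d : ℕ}
    (hF : F.IsWeightedHomogeneous w d) (g : MvPolynomial σ R) (e : ℕ) :
    weightedHomogeneousComponent w e (g * F) =
      if d ≤ e then weightedHomogeneousComponent w (e - d) g * F else 0 := by
  classical
  let := weightedGradedAlgebra R w
  simp_rw [← weightedDecomposition.decompose'_apply]
  exact DirectSum.coe_decompose_mul_of_right_mem _ e hF

theorem weight_le_sum_of_forall_lt [Fintype σ] {ν : σ →₀ ℕ} {N : σ → ℕ} (h : ∀ s, ν s < N s) :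
    Finsupp.weight w ν ≤ ∑ s, N s * w s := by
  rw [Finsupp.weight_apply, Finsupp.sum_fintype _ _ (by simp)]
  exact Finset.sum_le_sum fun s _ => Nat.mul_le_mul_right _ (h s).le

theorem IsWeightedHomogeneous.mem_of_sum_lt [Fintype σ] {J : Ideal (MvPolynomial σ R)}
    {N : σ → ℕ} (hN : ∀ s, X s ^ N s ∈ J) {p : MvPolynomial σ R} {e : ℕ}
    (hp : p.IsWeightedHomogeneous w e) (he : ∑ s, N s * w s < e) : p ∈ J := by
  rw [p.as_sum]
  refine J.sum_mem fun ν hν => ?_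
  obtain ⟨s, hs⟩ : ∃ s, N s ≤ ν s := by
    by_contra! h
    have := hp (mem_support_iff.mp hν)
    have := weight_le_sum_of_forall_lt (w := w) h
    omega
  have hsplit : monomial ν (p.coeff ν) =
      monomial (ν - Finsupp.single s (N s)) (p.coeff ν) * X s ^ N s := by
    rw [X_pow_eq_monomial, monomial_mul, mul_one, tsub_add_cancel_of_le]
    exact Finsupp.single_le_iff.mpr hs
  rw [hsplit]
  exact J.mul_mem_left _ (hN s)

end Weighted

variable {σ ι K : Type*} [Field K]

theorem finite_zeroLocus_of_finite_quotient (I : Ideal (MvPolynomial σ K))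
    [Module.Finite K (MvPolynomial σ K ⧸ I)] : (zeroLocus K I).Finite := by
  let φ : zeroLocus K I → (MvPolynomial σ K ⧸ I →ₐ[K] K) := fun x =>
    Ideal.Quotient.liftₐ I (aeval x.1) (mem_zeroLocus_iff.mp x.2)
  have hφ : Function.Injective φ := by
    intro x y hxy
    ext1; funext s
    simpa [φ] using congrArg (fun ψ => ψ (Ideal.Quotient.mk I (X s))) hxy
  -- a finite-dimensional algebra has finitely many characters (`Finite.algHom`)
  have := Finite.of_injective φ hφ
  exact Set.toFinite _

theorem finite_quotient_span_range_sub_C [Fintype σ] [Fintype ι] {w : σ → ℕ}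
    {f : ι → MvPolynomial σ K} {d : ι → ℕ} (hw : ∀ s, w s ≠ 0) (hd : ∀ i, d i ≠ 0)
    (hf : ∀ i, (f i).IsWeightedHomogeneous w (d i)) (B : ℕ)
    (hB : ∀ p e, B < e → p.IsWeightedHomogeneous w e → p ∈ Ideal.span (Set.range f))
    (c : ι → K) :
    Module.Finite K (MvPolynomial σ K ⧸ Ideal.span (Set.range fun i => f i - C (c i))) := by
  set I := Ideal.span (Set.range fun i => f i - C (c i))
  let π := Ideal.Quotient.mkₐ K I
  let M := (⨆ e : Fin (B + 1), weightedHomogeneousSubmodule K w e).map π.toLinearMap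
  have hM : M.FG := (Submodule.fg_iSup (fun e : Fin (B + 1) => weightedHomogeneousSubmodule K w e)
    fun e => weightedHomogeneousSubmodule_fg K w hw e).map _
  have hπf : ∀ i, π (f i) = algebraMap K _ (c i) := fun i => by
    rw [← π.commutes, MvPolynomial.algebraMap_eq, Ideal.Quotient.mkₐ_eq_mk, Ideal.Quotient.eq]
    exact Ideal.subset_span ⟨i, rfl⟩
  have hπM : ∀ e p, p.IsWeightedHomogeneous w e → π p ∈ M := by
    intro e
    induction e using Nat.strong_induction_on with
    | _ e ih =>
    intro p hp
    by_cases heB : e ≤ B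
    · exact Submodule.mem_map_of_mem
        (Submodule.mem_iSup_of_mem (⟨e, by omega⟩ : Fin (B + 1)) hp)
    -- write `p = ∑ gᵢ fᵢ` with `gᵢ` homogeneous of degree `e - dᵢ < e`; modulo `I`, `fᵢ ≡ cᵢ`
    obtain ⟨g, hg⟩ := Ideal.mem_span_range_iff_exists_fun.mp (hB p e (by omega) hp)
    rw [← hp.weightedHomogeneousComponent_same, ← hg, map_sum, map_sum]
    refine M.sum_mem fun i _ => ?_
    rw [weightedHomogeneousComponent_mul_of_isWeightedHomogeneous (hf i)]
    split_ifs with hi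
    · rw [map_mul, hπf, mul_comm, Algebra.algebraMap_eq_smul_one, smul_mul_assoc, one_mul]
      exact M.smul_mem _ (ih _ (by have := hd i; omega) _
        (weightedHomogeneousComponent_isWeightedHomogeneous _ _))
    · rw [map_zero]
      exact M.zero_mem
  have hMtop : M = ⊤ := by
    refine eq_top_iff.mpr fun y _ => ?_
    obtain ⟨p, rfl⟩ := Ideal.Quotient.mkₐ_surjective K I y
    induction p using MvPolynomial.induction_on' with
    | monomial ν a => exact hπM _ _ (isWeightedHomogeneous_monomial _ _ _ rfl)
    | add p q hp hq => rw [map_add]; exact M.add_mem (hp trivial) (hq trivial)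
  rw [Module.finite_def, ← hMtop]
  exact hM

variable [IsAlgClosed K]

theorem X_mem_radical_span_range [Finite σ] {f : ι → MvPolynomial σ K}
    (h0 : ∀ x : σ → K, (∀ i, eval x (f i) = 0) → x = 0) (s : σ) :
    X s ∈ (Ideal.span (Set.range f)).radical := by
  rw [← vanishingIdeal_zeroLocus_eq_radical (K := K), mem_vanishingIdeal_iff]
  intro x hx
  have : x = 0 := h0 x fun i => by simpa using hx _ (Ideal.subset_span ⟨i, rfl⟩)
  simp [this]

theorem finite_setOf_forall_eval_eq [Fintype σ] [Fintype ι] {w : σ → ℕ}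
    {f : ι → MvPolynomial σ K} {d : ι → ℕ} (hw : ∀ s, w s ≠ 0) (hd : ∀ i, d i ≠ 0)
    (hf : ∀ i, (f i).IsWeightedHomogeneous w (d i))
    (h0 : ∀ x : σ → K, (∀ i, eval x (f i) = 0) → x = 0) (c : ι → K) :
    {x : σ → K | ∀ i, eval x (f i) = c i}.Finite := by
  set I := Ideal.span (Set.range fun i => f i - C (c i))
  choose N hN using fun s => X_mem_radical_span_range h0 s
  have := finite_quotient_span_range_sub_C hw hd hf _ (fun p e he hp => hp.mem_of_sum_lt hN he) c
  refine (finite_zeroLocus_of_finite_quotient I).subset fun x hx => ?_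
  have hI : I ≤ RingHom.ker (aeval x) :=
    Ideal.span_le.mpr <| Set.range_subset_iff.mpr fun i => by simp [hx i]
  exact fun p hp => hI hp

end MvPolynomial

namespace Polynomial

variable {R S : Type*} [CommRing R] [CommRing S]

noncomputable def monicOfCoeffs (n : ℕ) {m : ℕ} (a : Fin m → R) : R[X] :=
  X ^ n + ∑ k : Fin m, C (a k) * X ^ (k : ℕ)

theorem map_monicOfCoeffs (f : R →+* S) (n : ℕ) {m : ℕ} (a : Fin m → R) :
    (monicOfCoeffs n a).map f = monicOfCoeffs n (f ∘ a) := by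
  simp [monicOfCoeffs, Polynomial.map_sum]

theorem coeff_monicOfCoeffs (n : ℕ) {m : ℕ} (a : Fin m → R) (j : ℕ) :
    (monicOfCoeffs n a).coeff j = (if j = n then 1 else 0) + if h : j < m then a ⟨j, h⟩ else 0 := by
  simp only [monicOfCoeffs, coeff_add, coeff_X_pow, finsetSum_coeff, coeff_C_mul_X_pow]
  congr 1
  split_ifs with h
  · rw [Finset.sum_eq_single ⟨j, h⟩ (fun k _ hk => if_neg fun hj => hk (Fin.ext hj.symm))
      (by simp), if_pos rfl]
  · exact Finset.sum_eq_zero fun k _ => if_neg fun (hj : j = k) => h (hj ▸ k.2)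

theorem coeff_monicOfCoeffs_coe {n m : ℕ} (hm : m ≤ n) (a : Fin m → R) (k : Fin m) :
    (monicOfCoeffs n a).coeff k = a k := by
  rw [coeff_monicOfCoeffs, if_neg (by omega), dif_pos k.2, zero_add]

theorem monic_monicOfCoeffs {n m : ℕ} (hm : m ≤ n) (a : Fin m → R) : (monicOfCoeffs n a).Monic :=
  monic_X_pow_add ((degree_sum_fin_lt a).trans_le (by exact_mod_cast hm))

theorem natDegree_monicOfCoeffs [Nontrivial R] {n m : ℕ} (hm : m ≤ n) (a : Fin m → R) :
    (monicOfCoeffs n a).natDegree = n := by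
  rw [monicOfCoeffs, natDegree_add_eq_left_of_degree_lt, natDegree_X_pow]
  rw [degree_X_pow]
  exact (degree_sum_fin_lt a).trans_le (by exact_mod_cast hm)

theorem eq_monicOfCoeffs {p : R[X]} (hp : p.Monic) {n m : ℕ} (hpn : p.natDegree = n) (hm : m ≤ n)
    (hgap : ∀ j, m ≤ j → j < n → p.coeff j = 0) :
    p = monicOfCoeffs n fun k : Fin m => p.coeff k := by
  ext j
  rw [coeff_monicOfCoeffs]
  rcases lt_trichotomy j n with hj | rfl | hj
  · rw [if_neg hj.ne, zero_add]
    split_ifs with h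
    · rfl
    · exact hgap j (by omega) hj
  · rw [if_pos rfl, dif_neg (by omega), ← hpn, hp.coeff_natDegree, add_zero]
  · rw [if_neg (by omega), dif_neg (by omega), zero_add]
    exact coeff_eq_zero_of_natDegree_lt (hpn ▸ hj)

theorem coeff_natCast_mul_sq_sub_mul_derivative {z p : R[X]} {n m : ℕ}
    (hn : n ≠ 0) (hz : z.Monic) (hzn : z.natDegree = n) (hp : p.Monic) (hpn : p.natDegree = n + 1)
    (hm : 2 * n ≤ m) : ((n : R[X]) * z ^ 2 - p * derivative z).coeff m = 0 := by
  have hz' : (derivative z).natDegree ≤ n - 1 := hzn ▸ natDegree_derivative_le z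
  have hzc : z.coeff n = 1 := hzn ▸ hz.coeff_natDegree
  have hpc : p.coeff (n + 1) = 1 := hpn ▸ hp.coeff_natDegree
  rw [coeff_sub, coeff_natCast_mul]
  rcases hm.eq_or_lt with rfl | hm
  · have hsq : (z ^ 2).coeff (2 * n) = 1 := by
      rw [coeff_pow_of_natDegree_le hzn.le, hzc, one_pow]
    have hpz : (p * derivative z).coeff (n + 1 + (n - 1)) = n := by
      rw [coeff_mul_add_eq_of_natDegree_le hpn.le hz', hpc, one_mul,
        coeff_derivative, Nat.sub_add_cancel (by omega), hzc, one_mul, ← Nat.cast_succ,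
        Nat.succ_eq_add_one, Nat.sub_add_cancel (Nat.one_le_iff_ne_zero.mpr hn)]
    rw [hsq, show 2 * n = n + 1 + (n - 1) by omega, hpz, mul_one, sub_self]
  · rw [coeff_eq_zero_of_natDegree_lt, coeff_eq_zero_of_natDegree_lt, mul_zero, sub_zero]
    · exact (natDegree_mul_le.trans (add_le_add hpn.le hz')).trans_lt (by omega)
    · exact (natDegree_pow_le.trans (by rw [hzn])).trans_lt hm

variable {K : Type*} [Field K] [CharZero K]

theorem exists_monic_natCast_mul_sq_sub_mul_derivative_eq {z : K[X]} (hz : z.Monic)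
    (hn : z.natDegree ≠ 0) (h : derivative z ∣ z ^ 2 - 1) :
    ∃ p : K[X], p.Monic ∧ p.natDegree = z.natDegree + 1 ∧
      (z.natDegree : K[X]) * z ^ 2 - p * derivative z = z.natDegree := by
  set n := z.natDegree
  obtain ⟨c, hc⟩ := h
  have hn' : (n : K) ≠ 0 := Nat.cast_ne_zero.mpr hn
  have hsq : (z ^ 2).natDegree = 2 * n := by rw [hz.natDegree_pow, mul_comm]
  have hq : (z ^ 2 - 1).Monic := (hz.pow 2).sub_of_left <| by
    rw [degree_one, degree_eq_natDegree (hz.pow 2).ne_zero, hsq]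
    exact_mod_cast (by omega : 0 < 2 * n)
  have hqn : (z ^ 2 - 1).natDegree = 2 * n := by rw [← C_1, natDegree_sub_C, hsq]
  have hc0 : c ≠ 0 := by rintro rfl; exact hq.ne_zero (by rw [hc, mul_zero])
  have hcn : c.natDegree = n + 1 := by
    have := congrArg natDegree hc
    rw [hqn, natDegree_mul (derivative_ne_zero.mpr hn) hc0, natDegree_derivative] at this
    omega
  have hcl : (n : K) * c.leadingCoeff = 1 := by
    simpa [hq.leadingCoeff, hz.leadingCoeff, n] using (congrArg leadingCoeff hc).symm
  refine ⟨C (n : K) * c, ?_, by rw [natDegree_C_mul hn', hcn], ?_⟩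
  · rwa [Monic, leadingCoeff_mul, leadingCoeff_C]
  · rw [← map_natCast C]
    linear_combination C (n : K) * hc

variable [IsAlgClosed K]

theorem card_roots_toFinset_add_natDegree_derivative [DecidableEq K] {z : K[X]} (hz : z ≠ 0)
    (h : ∀ ξ, (derivative z).IsRoot ξ → z.IsRoot ξ) :
    z.roots.toFinset.card + (derivative z).natDegree = z.natDegree := by
  have hcount : ∀ ξ ∈ z.roots.toFinset, (derivative z).roots.count ξ + 1 = z.roots.count ξ := by
    intro ξ hξ
    have hroot : z.IsRoot ξ := isRoot_of_mem_roots (Multiset.mem_toFinset.mp hξ)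
    rw [count_roots, count_roots, derivative_rootMultiplicity_of_root hroot,
      Nat.sub_add_cancel ((rootMultiplicity_pos hz).mpr hroot)]
  have hsub : ∀ ξ ∈ (derivative z).roots, ξ ∈ z.roots.toFinset := fun ξ hξ =>
    Multiset.mem_toFinset.mpr ((mem_roots hz).mpr (h ξ (isRoot_of_mem_roots hξ)))
  rw [← IsAlgClosed.card_roots_eq_natDegree, ← IsAlgClosed.card_roots_eq_natDegree,
    ← Multiset.sum_count_eq_card hsub, ← Multiset.toFinset_sum_count_eq, add_comm,
    Finset.card_eq_sum_ones, ← Finset.sum_add_distrib]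
  exact Finset.sum_congr rfl hcount

theorem eq_X_sub_C_pow_of_derivative_dvd_sq {z : K[X]} (hz : z.Monic) (h : derivative z ∣ z ^ 2) :
    ∃ ξ, z = (X - C ξ) ^ z.natDegree := by
  classical
  rcases Nat.eq_zero_or_pos z.natDegree with h0 | hpos
  · exact ⟨0, by rw [h0, pow_zero, eq_one_of_monic_natDegree_zero hz h0]⟩
  have hcard := card_roots_toFinset_add_natDegree_derivative hz.ne_zero
    fun ξ hξ => by simpa using hξ.dvd h
  rw [natDegree_derivative] at hcard
  obtain ⟨ξ, hξ⟩ := Finset.card_eq_one.mp (show z.roots.toFinset.card = 1 by omega)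
  have hroots : z.roots = Multiset.replicate z.natDegree ξ := by
    refine Multiset.eq_replicate.mpr ⟨IsAlgClosed.card_roots_eq_natDegree, fun b hb => ?_⟩
    simpa [hξ] using Multiset.mem_toFinset.mpr hb
  refine ⟨ξ, ?_⟩
  conv_lhs => rw [(IsAlgClosed.splits z).eq_prod_roots_of_monic hz, hroots]
  simp

theorem eq_X_pow_of_derivative_dvd_sq {z : K[X]} {n : ℕ} (hz : z.Monic) (hzn : z.natDegree = n)
    (hred : z.coeff (n - 1) = 0) (h : derivative z ∣ z ^ 2) : z = X ^ n := by
  obtain ⟨ξ, hξ⟩ := eq_X_sub_C_pow_of_derivative_dvd_sq hz h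
  rcases Nat.eq_zero_or_pos n with rfl | hn
  · rw [hξ, hzn, pow_zero, pow_zero]
  rw [hξ, hzn, sub_eq_add_neg, ← C_neg, coeff_X_add_C_pow, Nat.sub_sub_self hn, pow_one,
    Nat.choose_symm hn, Nat.choose_one_right] at hred
  rw [hξ, hzn, neg_eq_zero.mp ((mul_eq_zero.mp hred).resolve_right (by exact_mod_cast hn.ne')),
    C_0, sub_zero]

end Polynomial

section HomogeneousWithX

variable {σ R : Type*} [CommRing R] (w : σ → ℕ)

/-- Weighted homogeneity of degree `d` once `x` is given weight `1`. -/
def homogeneousWithX (d : ℕ) : AddSubgroup (MvPolynomial σ R)[X] where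
  carrier := {P | ∀ m, P.coeff m ∈ MvPolynomial.weightedHomogeneousSubmodule R w (d - m) ∧
    (d < m → P.coeff m = 0)}
  add_mem' {P Q} hP hQ m := by
    refine ⟨?_, fun h => ?_⟩
    · rw [coeff_add]; exact add_mem (hP m).1 (hQ m).1
    · rw [coeff_add, (hP m).2 h, (hQ m).2 h, add_zero]
  zero_mem' m := by simp
  neg_mem' {P} hP m := by
    refine ⟨?_, fun h => ?_⟩
    · rw [coeff_neg]; exact neg_mem (hP m).1
    · rw [coeff_neg, (hP m).2 h, neg_zero]

variable {w}

theorem mul_mem_homogeneousWithX {d e : ℕ} {P Q : (MvPolynomial σ R)[X]}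
    (hP : P ∈ homogeneousWithX w d) (hQ : Q ∈ homogeneousWithX w e) :
    P * Q ∈ homogeneousWithX w (d + e) := by
  intro m
  rw [coeff_mul]
  refine ⟨Submodule.sum_mem _ fun ij hij => ?_, fun hm => Finset.sum_eq_zero fun ij hij => ?_⟩
  all_goals
    obtain ⟨i, j⟩ := ij
    rw [Finset.HasAntidiagonal.mem_antidiagonal] at hij
    dsimp only
    by_cases hi : d < i
    · rw [(hP i).2 hi, zero_mul]; try exact zero_mem _
    by_cases hj : e < j
    · rw [(hQ j).2 hj, mul_zero]; try exact zero_mem _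
  · have := (hP i).1.mul (hQ j).1
    rwa [show d - i + (e - j) = d + e - m by omega] at this
  · omega

theorem derivative_mem_homogeneousWithX {d : ℕ} {P : (MvPolynomial σ R)[X]}
    (hP : P ∈ homogeneousWithX w (d + 1)) : derivative P ∈ homogeneousWithX w d := by
  intro m
  rw [coeff_derivative]
  refine ⟨?_, fun hm => by rw [(hP (m + 1)).2 (by omega), zero_mul]⟩
  have := (hP (m + 1)).1.mul (MvPolynomial.isWeightedHomogeneous_C w ((m : R) + 1))
  rwa [show d + 1 - (m + 1) + 0 = d - m by omega, map_add, map_natCast, map_one] at this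

theorem C_mul_X_pow_mem_homogeneousWithX {a : MvPolynomial σ R} {e : ℕ}
    (ha : a.IsWeightedHomogeneous w e) (k : ℕ) : C a * X ^ k ∈ homogeneousWithX w (e + k) := by
  intro m
  rw [coeff_C_mul_X_pow]
  split_ifs with h
  · subst h; exact ⟨by rwa [Nat.add_sub_cancel], fun h => by omega⟩
  · exact ⟨zero_mem _, fun _ => rfl⟩

theorem X_pow_mem_homogeneousWithX (d : ℕ) :
    (X ^ d : (MvPolynomial σ R)[X]) ∈ homogeneousWithX w d := by
  simpa using C_mul_X_pow_mem_homogeneousWithX (MvPolynomial.isWeightedHomogeneous_one R w) d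

theorem natCast_mem_homogeneousWithX (n : ℕ) :
    (n : (MvPolynomial σ R)[X]) ∈ homogeneousWithX w 0 := by
  have := C_mul_X_pow_mem_homogeneousWithX (MvPolynomial.isWeightedHomogeneous_C w (n : R)) 0
  rwa [map_natCast, map_natCast, pow_zero, mul_one] at this

theorem monicOfCoeffs_mem_homogeneousWithX {n m : ℕ} (hm : m ≤ n) {a : Fin m → MvPolynomial σ R}
    (ha : ∀ k : Fin m, (a k).IsWeightedHomogeneous w (n - k)) :
    monicOfCoeffs n a ∈ homogeneousWithX w n := by
  refine add_mem (X_pow_mem_homogeneousWithX n) (sum_mem fun k _ => ?_)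
  have := C_mul_X_pow_mem_homogeneousWithX (ha k) k
  rwa [Nat.sub_add_cancel (by omega)] at this

end HomogeneousWithX

namespace Admissible

variable (R : Type*) [CommRing R] (n : ℕ)

/-- `inl k` is the coefficient of `x ^ k` in `z` (the coefficient of `x ^ (n - 1)` being `0`),
`inr k` the coefficient of `x ^ k` in `p`. -/
abbrev Var := Fin (n - 1) ⊕ Fin (n + 1)

def weight : Var n → ℕ := Sum.elim (fun k => n - k) (fun k => n + 1 - k)

noncomputable def genericZ : (MvPolynomial (Var n) R)[X] :=
  monicOfCoeffs n fun k => MvPolynomial.X (Sum.inl k)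

noncomputable def genericP : (MvPolynomial (Var n) R)[X] :=
  monicOfCoeffs (n + 1) fun k => MvPolynomial.X (Sum.inr k)

noncomputable def genericDefect : (MvPolynomial (Var n) R)[X] :=
  n * genericZ R n ^ 2 - genericP R n * derivative (genericZ R n)

variable {n}

theorem weight_ne_zero (s : Var n) : weight n s ≠ 0 := by
  rcases s with k | k <;> simp only [weight, Sum.elim_inl, Sum.elim_inr] <;> omega

theorem isWeightedHomogeneous_coeff_genericDefect (hn : n ≠ 0) (m : ℕ) :
    ((genericDefect R n).coeff m).IsWeightedHomogeneous (weight n) (2 * n - m) := by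
  have hX (s : Var n) := MvPolynomial.isWeightedHomogeneous_X R (weight n) s
  have hZ : genericZ R n ∈ homogeneousWithX (weight n) (n - 1 + 1) := by
    rw [Nat.sub_add_cancel (Nat.one_le_iff_ne_zero.mpr hn)]
    exact monicOfCoeffs_mem_homogeneousWithX (by omega) fun k => hX (Sum.inl k)
  have hP : genericP R n ∈ homogeneousWithX (weight n) (n + 1) :=
    monicOfCoeffs_mem_homogeneousWithX le_rfl fun k => hX (Sum.inr k)
  have hZ2 := mul_mem_homogeneousWithX (natCast_mem_homogeneousWithX n)
    (mul_mem_homogeneousWithX hZ hZ)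
  have hPZ := mul_mem_homogeneousWithX hP (derivative_mem_homogeneousWithX hZ)
  rw [show 0 + (n - 1 + 1 + (n - 1 + 1)) = 2 * n by omega] at hZ2
  rw [show n + 1 + (n - 1) = 2 * n by omega] at hPZ
  rw [genericDefect, sq]
  exact (sub_mem hZ2 hPZ m).1

theorem map_eval_genericZ (x : Var n → R) :
    (genericZ R n).map (MvPolynomial.eval x) = monicOfCoeffs n (x ∘ Sum.inl) := by
  simp [genericZ, map_monicOfCoeffs, Function.comp_def]

theorem map_eval_genericDefect (x : Var n → R) :
    (genericDefect R n).map (MvPolynomial.eval x) = n * monicOfCoeffs n (x ∘ Sum.inl) ^ 2 -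
      monicOfCoeffs (n + 1) (x ∘ Sum.inr) * derivative (monicOfCoeffs n (x ∘ Sum.inl)) := by
  rw [genericDefect, Polynomial.map_sub, Polynomial.map_mul, Polynomial.map_mul,
    Polynomial.map_pow, Polynomial.map_natCast, ← derivative_map, map_eval_genericZ, genericP,
    map_monicOfCoeffs]
  simp only [Function.comp_def, MvPolynomial.eval_X]

variable {K : Type*} [Field K] [CharZero K]

theorem eq_zero_of_forall_eval_coeff_genericDefect_eq_zero [IsAlgClosed K] (hn : n ≠ 0)
    (x : Var n → K)
    (hx : ∀ m : Fin (2 * n), MvPolynomial.eval x ((genericDefect K n).coeff m) = 0) : x = 0 := by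
  set z := monicOfCoeffs n (x ∘ Sum.inl)
  set p := monicOfCoeffs (n + 1) (x ∘ Sum.inr)
  have hn' : (n : K) ≠ 0 := Nat.cast_ne_zero.mpr hn
  have hz : z.Monic := monic_monicOfCoeffs (by omega) _
  have hp : p.Monic := monic_monicOfCoeffs le_rfl _
  have hE : (n : K[X]) * z ^ 2 = p * derivative z := by
    rw [← sub_eq_zero]
    ext m
    rw [coeff_zero]
    by_cases hm : m < 2 * n
    · have := hx ⟨m, hm⟩
      rwa [← coeff_map, map_eval_genericDefect] at this
    · exact coeff_natCast_mul_sq_sub_mul_derivative hn hz (natDegree_monicOfCoeffs (by omega) _)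
        hp (natDegree_monicOfCoeffs le_rfl _) (by omega)
  have hzX : z = X ^ n := by
    refine eq_X_pow_of_derivative_dvd_sq hz (natDegree_monicOfCoeffs (by omega) _) ?_
      ⟨C (n : K)⁻¹ * p, ?_⟩
    · rw [coeff_monicOfCoeffs, if_neg (by omega), dif_neg (by omega), add_zero]
    · rw [mul_left_comm, mul_comm (derivative z), ← hE, ← map_natCast C, ← mul_assoc, ← C_mul,
        inv_mul_cancel₀ hn', C_1, one_mul]
  have hpX : p = X ^ (n + 1) := by
    rw [hzX, derivative_X_pow] at hE
    refine (mul_right_cancel₀ (by simp [hn]) (hE.symm.trans ?_) : p = _)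
    rw [← map_natCast C, ← pow_mul, show n * 2 = n + 1 + (n - 1) by omega, pow_add]
    ring
  funext s
  rcases s with k | k
  · have := congrArg (coeff · k) hzX
    simpa [z, coeff_monicOfCoeffs_coe, coeff_X_pow, show (k : ℕ) ≠ n by omega] using this
  · have := congrArg (coeff · k) hpX
    simpa [p, coeff_monicOfCoeffs_coe, coeff_X_pow, show (k : ℕ) ≠ n + 1 by omega] using this

theorem exists_eval_coeff_genericDefect {z : K[X]} (hz : z.Monic) (hzn : z.natDegree = n)
    (hn : n ≠ 0) (hred : z.coeff (n - 1) = 0) (h : derivative z ∣ z ^ 2 - 1) :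
    ∃ x : Var n → K,
      (∀ m : Fin (2 * n), MvPolynomial.eval x ((genericDefect K n).coeff m) = (n : K[X]).coeff m) ∧
        (genericZ K n).map (MvPolynomial.eval x) = z := by
  subst hzn
  obtain ⟨p, hp, hpn, hE⟩ := exists_monic_natCast_mul_sq_sub_mul_derivative_eq hz hn h
  have hzx : monicOfCoeffs z.natDegree (fun k : Fin (z.natDegree - 1) => z.coeff k) = z :=
    (eq_monicOfCoeffs hz rfl (by omega) fun j _ _ => by
      rwa [show j = z.natDegree - 1 by omega]).symm
  have hpx : monicOfCoeffs (z.natDegree + 1) (fun k : Fin (z.natDegree + 1) => p.coeff k) = p :=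
    (eq_monicOfCoeffs hp hpn le_rfl fun j _ _ => by omega).symm
  refine ⟨Sum.elim (fun k => z.coeff k) (fun k => p.coeff k), fun m => ?_, ?_⟩
  · rw [← coeff_map, map_eval_genericDefect]
    simp only [Function.comp_def, Sum.elim_inl, Sum.elim_inr, hzx, hpx, hE]
  · rw [map_eval_genericZ]
    exact hzx

end Admissible

theorem admissible_polynomials_finite (n : ℕ) :
    {z : Polynomial ℂ | z.Monic ∧ z.natDegree = n ∧ z.coeff (n - 1) = 0 ∧
      Polynomial.derivative z ∣ z ^ 2 - 1}.Finite := by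
  rcases eq_or_ne n 0 with rfl | hn
  · exact (Set.finite_singleton 1).subset fun z hz => eq_one_of_monic_natDegree_zero hz.1 hz.2.1
  have hsol := MvPolynomial.finite_setOf_forall_eval_eq Admissible.weight_ne_zero
    (d := fun m : Fin (2 * n) => 2 * n - m) (fun m => by have := m.2; omega)
    (fun m => Admissible.isWeightedHomogeneous_coeff_genericDefect ℂ hn m)
    (Admissible.eq_zero_of_forall_eval_coeff_genericDefect_eq_zero hn) fun m => (n : ℂ[X]).coeff m
  refine (hsol.image fun x => (Admissible.genericZ ℂ n).map (MvPolynomial.eval x)).subset ?_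
  rintro z ⟨hz, hzn, hred, h⟩
  exact Admissible.exists_eval_coeff_genericDefect hz hzn hn hred h
end
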